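/- Let t be a tensor reduced monoidal t-structure on a monoidal triangulated category T in which every object has a left dual. Then (D^{≤0})* ⊆ D^{≥0} and (D^{≥0})* ⊆ D^{≤0}, where (−)* denotes left duals; consequently the heart H_t is closed under taking left duals. Dually for right duals. In particular, if T is rigid and End(𝟙) ≅ k, then H_t is a tensor category. -/

import Mathlib

open CategoryTheory Category Limits Pretriangulated Triangulated MonoidalCategory

namespace Paper

variable (C : Type*) [Category C] [Preadditive C] [HasZeroObject C] [HasShift C ℤ]
  [∀ n : ℤ, (shiftFunctor C n).Additive] [Pretriangulated C]

/-- Truncation and cohomology data for a t-structure `t`: the truncation functors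
`τ^{≤ n}`, `τ^{≥ n}` together with the natural maps `τ^{≤ n} X ⟶ X ⟶ τ^{≥ n+1} X`
and the connecting maps forming distinguished truncation triangles. -/
structure TruncData (t : TStructure C) where
  τle : ℤ → C ⥤ C
  τge : ℤ → C ⥤ C
  τle_mem (n : ℤ) (X : C) : t.le n ((τle n).obj X)
  τge_mem (n : ℤ) (X : C) : t.ge n ((τge n).obj X)
  ι (n : ℤ) : τle n ⟶ 𝟭 C
  π (n : ℤ) : 𝟭 C ⟶ τge n
  δ (n : ℤ) (X : C) : (τge (n + 1)).obj X ⟶ ((τle n).obj X)⟦(1 : ℤ)⟧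
  triangle_mem (n : ℤ) (X : C) :
    Triangle.mk ((ι n).app X) ((π (n + 1)).app X) (δ n X) ∈ distTriang C

variable {C}

/-- The cohomological functor `H^n_t := Σ^n ∘ τ^{≤ n} ∘ τ^{≥ n}`, valued in the heart. -/
def TruncData.H {t : TStructure C} (d : TruncData C t) (n : ℤ) : C ⥤ C :=
  d.τge n ⋙ d.τle n ⋙ shiftFunctor C n

/-- The heart `D^{≤ 0} ∩ D^{≥ 0}` of a t-structure. -/
def Heart (t : TStructure C) (X : C) : Prop := t.le 0 X ∧ t.ge 0 X

/-- A t-structure is bounded if every object lies in some `D^{≤ b} ∩ D^{≥ a}`. -/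
def IsBounded (t : TStructure C) : Prop := ∀ X : C, ∃ a b : ℤ, t.le b X ∧ t.ge a X


section Monoidal

variable (C) [MonoidalCategory C]

/-- A monoidal triangulated category: the tensor product is exact in each variable,
with compatibility isomorphisms `Σ(X) ⊗ Y ≅ Σ(X ⊗ Y)` and `X ⊗ Σ(Y) ≅ Σ(X ⊗ Y)`. -/
class MonoidalTriangulated where
  shiftTensor (n : ℤ) (X Y : C) : ((X⟦n⟧) ⊗ Y) ≅ ((X ⊗ Y)⟦n⟧)
  tensorShift (n : ℤ) (X Y : C) : (X ⊗ (Y⟦n⟧)) ≅ ((X ⊗ Y)⟦n⟧)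
  whiskerLeft_distinguished (X : C) (T : Triangle C) (hT : T ∈ distTriang C) :
    Triangle.mk (X ◁ T.mor₁) (X ◁ T.mor₂)
      ((X ◁ T.mor₃) ≫ (tensorShift 1 X T.obj₁).hom) ∈ distTriang C
  whiskerRight_distinguished (Y : C) (T : Triangle C) (hT : T ∈ distTriang C) :
    Triangle.mk (T.mor₁ ▷ Y) (T.mor₂ ▷ Y)
      ((T.mor₃ ▷ Y) ≫ (shiftTensor 1 T.obj₁ Y).hom) ∈ distTriang C

/-- The deviation of the `k`-shifted t-structure `Σ^{-k} t = (D^{≤ k}, D^{≥ k+1})`: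
the set of integers `n` with `D^{≤ k} ⊗ D^{≤ k+n} ⊆ D^{≤ k}` and
`D^{≥ k} ⊗ D^{≥ k+n} ⊆ D^{≥ k}`.  The deviation of `t` itself is `dev C t 0`. -/
def dev (t : TStructure C) (k : ℤ) : Set ℤ :=
  {n | (∀ X Y : C, t.le k X → t.le (k + n) Y → t.le k (X ⊗ Y)) ∧
       (∀ X Y : C, t.ge k X → t.ge (k + n) Y → t.ge k (X ⊗ Y))}

variable {C}

/-- The Künneth formula: `H^n(X ⊗ Y)` is the (bi)product `⊕_{p+q=n} H^p(X) ⊗ H^q(Y)`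
(all but finitely many summands are zero, so the product is the coproduct). -/
def Kunneth {t : TStructure C} (d : TruncData C t) : Prop :=
  ∀ (n : ℤ) (X Y : C),
    ∃ p : ∀ q : ℤ, ((d.H n).obj (X ⊗ Y)) ⟶ (((d.H q).obj X) ⊗ ((d.H (n - q)).obj Y)),
      Nonempty (IsLimit (Fan.mk ((d.H n).obj (X ⊗ Y)) p))

variable (C) in
/-- A monoidal additive category is tensor reduced if `X ⊗ X = 0` implies `X = 0`. -/
def TensorReducedCat : Prop := ∀ X : C, IsZero (X ⊗ X) → IsZero X

/-- A monoidal t-structure is tensor reduced if its heart is: for `X` in the heart,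
`X ⊗ X = 0` implies `X = 0`. -/
def TensorReduced (t : TStructure C) : Prop :=
  ∀ X : C, Heart t X → IsZero (X ⊗ X) → IsZero X

end Monoidal

/-!
The unit lies in the heart. If `𝟙 ∈ D^{≤ b}` with `b > 0`, then `H^{2b}(𝟙 ⊗ 𝟙) = 0`, so by
Künneth its factor `H^b(𝟙) ⊗ H^b(𝟙)` vanishes; as `H^b(𝟙)` lies in the heart and `t` is tensor
reduced, `H^b(𝟙) = 0`, i.e. `𝟙 ∈ D^{≤ b-1}`. Starting from boundedness this descends to
`𝟙 ∈ D^{≤ 0}`, and dually `𝟙 ∈ D^{≥ 0}`.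

Duality then does the rest: for `X ∈ D^{≤ 0}` and `W ∈ D^{≤ -1}`,
`Hom(W, ᘁX) ≃ Hom(X ⊗ W, 𝟙) = 0` because `0 ∈ dev(t)` puts `X ⊗ W` in `D^{≤ -1}` while
`𝟙 ∈ D^{≥ 0}`; hence `ᘁX ∈ D^{≥ 0}`. The other three inclusions are the same argument with the
other adjunction of an exact pairing.
-/

lemma isZero_of_le_of_ge {t : TStructure C} {n : ℤ} {X : C} (h₁ : t.le n X)
    (h₂ : t.ge (n + 1) X) : IsZero X := by
  have : t.IsLE X n := ⟨h₁⟩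
  have : t.IsGE X (n + 1) := ⟨h₂⟩
  exact t.isZero X n (n + 1)

lemma isZero_of_isLimit_fan {D ι : Type*} [Category D] [HasZeroMorphisms D] {F : ι → D} {P : D}
    {p : ∀ i, P ⟶ F i} (hl : IsLimit (Fan.mk P p)) (hP : IsZero P) (i : ι) : IsZero (F i) := by
  classical
  let c := Fan.mk (F i) (Pi.single i (𝟙 (F i)))
  have hfac := hl.fac c ⟨i⟩
  rw [hP.eq_of_tgt (hl.lift c) 0, zero_comp] at hfac
  simpa [IsZero.iff_id_eq_zero, c] using hfac.symm

namespace TruncData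

variable {t : TStructure C} (d : TruncData C t)

lemma le_τge_obj_of_le {m : ℤ} (n : ℤ) {X : C} (hX : t.le m X) (hnm : n ≤ m) :
    t.le m ((d.τge (n + 1)).obj X) :=
  (t.isLE₂ _ (rot_of_distTriang _ (d.triangle_mem n X)) m ⟨hX⟩
    ⟨t.le_monotone (by omega) _ (t.le_shift n 1 (n - 1) (by omega) _ (d.τle_mem n X))⟩).le

lemma ge_τle_obj_of_ge {m : ℤ} (n : ℤ) {X : C} (hX : t.ge m X) (hmn : m ≤ n + 1) :
    t.ge m ((d.τle n).obj X) :=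
  (t.isGE₂ _ (inv_rot_of_distTriang _ (d.triangle_mem n X)) m
    ⟨t.ge_antitone (by omega) _
      (t.ge_shift (n + 1) (-1) (n + 2) (by omega) _ (d.τge_mem (n + 1) X))⟩ ⟨hX⟩).ge

lemma isZero_τge_obj_of_le (n : ℤ) {X : C} (hX : t.le n X) : IsZero ((d.τge (n + 1)).obj X) :=
  isZero_of_le_of_ge (d.le_τge_obj_of_le n hX le_rfl) (d.τge_mem (n + 1) X)

lemma isZero_τle_obj_of_ge (n : ℤ) {X : C} (hX : t.ge (n + 1) X) : IsZero ((d.τle n).obj X) :=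
  isZero_of_le_of_ge (d.τle_mem n X) (d.ge_τle_obj_of_ge n hX le_rfl)

lemma le_of_isZero_τge_obj (n : ℤ) {X : C} (h : IsZero ((d.τge (n + 1)).obj X)) : t.le n X :=
  (t.isLE₂ _ (d.triangle_mem n X) n ⟨d.τle_mem n X⟩ (t.isLE_of_isZero h n)).le

lemma ge_of_isZero_τle_obj (n : ℤ) {X : C} (h : IsZero ((d.τle n).obj X)) : t.ge (n + 1) X :=
  (t.isGE₂ _ (d.triangle_mem n X) (n + 1) (t.isGE_of_isZero h _) ⟨d.τge_mem (n + 1) X⟩).ge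

lemma isIso_π_app_of_ge {n : ℤ} {X : C} (hX : t.ge n X) : IsIso ((d.π n).app X) := by
  obtain ⟨m, rfl⟩ : ∃ m, n = m + 1 := ⟨n - 1, by omega⟩
  exact (Triangle.isZero₁_iff_isIso₂ _ (d.triangle_mem m X)).1 (d.isZero_τle_obj_of_ge m hX)

lemma heart_H_obj (n : ℤ) (X : C) : Heart t ((d.H n).obj X) :=
  ⟨t.le_shift n n 0 (by omega) _ (d.τle_mem n _),
    t.ge_shift n n 0 (by omega) _ (d.ge_τle_obj_of_ge n (d.τge_mem n X) (by omega))⟩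

lemma isZero_H_obj_of_le {b n : ℤ} {X : C} (hX : t.le b X) (hbn : b < n) :
    IsZero ((d.H n).obj X) := by
  obtain ⟨m, rfl⟩ : ∃ m, n = m + 1 := ⟨n - 1, by omega⟩
  have hU := d.isZero_τge_obj_of_le m (t.le_monotone (by omega : b ≤ m) _ hX)
  exact (shiftFunctor C _).map_isZero (d.isZero_τle_obj_of_ge _ (t.isGE_of_isZero hU _).ge)

lemma isZero_H_obj_of_ge {a n : ℤ} {X : C} (hX : t.ge a X) (hna : n < a) :
    IsZero ((d.H n).obj X) := by
  have := d.isIso_π_app_of_ge (t.ge_antitone (by omega : n ≤ a) _ hX)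
  exact (shiftFunctor C n).map_isZero ((d.isZero_τle_obj_of_ge n
    (t.ge_antitone (by omega) _ hX)).of_iso ((d.τle n).mapIso (asIso ((d.π n).app X))).symm)

lemma le_sub_one_of_isZero_H_obj {n : ℤ} {X : C} (hX : t.le n X)
    (hH : IsZero ((d.H n).obj X)) : t.le (n - 1) X := by
  obtain ⟨m, rfl⟩ : ∃ m, n = m + 1 := ⟨n - 1, by omega⟩
  rw [add_sub_cancel_right]
  apply d.le_of_isZero_τge_obj m
  have hτ := IsZero.of_full_of_faithful_of_isZero (shiftFunctor C (m + 1)) _ hH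
  exact isZero_of_le_of_ge (d.le_τge_obj_of_le m hX (by omega)) (d.ge_of_isZero_τle_obj _ hτ)

lemma ge_add_one_of_isZero_H_obj {n : ℤ} {X : C} (hX : t.ge n X)
    (hH : IsZero ((d.H n).obj X)) : t.ge (n + 1) X := by
  have := d.isIso_π_app_of_ge hX
  exact d.ge_of_isZero_τle_obj n ((IsZero.of_full_of_faithful_of_isZero (shiftFunctor C n) _
    hH).of_iso ((d.τle n).mapIso (asIso ((d.π n).app X))))

end TruncData

section Unit

variable [MonoidalCategory C] {t : TStructure C} {d : TruncData C t}

lemma isZero_H_tensor_H_of_kunneth (hd : Kunneth d) {p q : ℤ} {X Y : C}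
    (h : IsZero ((d.H (p + q)).obj (X ⊗ Y))) : IsZero ((d.H p).obj X ⊗ (d.H q).obj Y) := by
  obtain ⟨π, ⟨hl⟩⟩ := hd (p + q) X Y
  simpa using isZero_of_isLimit_fan hl h p

lemma le_sub_one_of_tensor_self_le (hd : Kunneth d) (hred : TensorReduced t) {n : ℤ} {X : C}
    (hX : t.le n X) (hXX : t.le (2 * n - 1) (X ⊗ X)) : t.le (n - 1) X :=
  d.le_sub_one_of_isZero_H_obj hX <| hred _ (d.heart_H_obj n X) <|
    isZero_H_tensor_H_of_kunneth hd (d.isZero_H_obj_of_le hXX (by omega))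

lemma ge_add_one_of_tensor_self_ge (hd : Kunneth d) (hred : TensorReduced t) {n : ℤ} {X : C}
    (hX : t.ge n X) (hXX : t.ge (2 * n + 1) (X ⊗ X)) : t.ge (n + 1) X :=
  d.ge_add_one_of_isZero_H_obj hX <| hred _ (d.heart_H_obj n X) <|
    isZero_H_tensor_H_of_kunneth hd (d.isZero_H_obj_of_ge hXX (by omega))

lemma le_zero_of_tensor_self_iso (hd : Kunneth d) (hred : TensorReduced t) {X : C}
    (e : X ⊗ X ≅ X) {b : ℕ} (hb : t.le b X) : t.le 0 X := by
  induction b with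
  | zero => exact hb
  | succ b ih =>
    have hXX : t.le (2 * ((b + 1 : ℕ) : ℤ) - 1) (X ⊗ X) :=
      t.le_monotone (by omega) _ ((t.le _).prop_of_iso e.symm hb)
    exact ih (by simpa only [Nat.cast_succ, add_sub_cancel_right]
      using le_sub_one_of_tensor_self_le hd hred hb hXX)

lemma ge_zero_of_tensor_self_iso (hd : Kunneth d) (hred : TensorReduced t) {X : C}
    (e : X ⊗ X ≅ X) {a : ℕ} (ha : t.ge (-a) X) : t.ge 0 X := by
  induction a with
  | zero => simpa using ha
  | succ a ih =>
    have hXX : t.ge (2 * -((a + 1 : ℕ) : ℤ) + 1) (X ⊗ X) :=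
      t.ge_antitone (by omega) _ ((t.ge _).prop_of_iso e.symm ha)
    apply ih
    convert ge_add_one_of_tensor_self_ge hd hred ha hXX using 2
    omega

lemma heart_unit (ht : IsBounded t) (hd : Kunneth d) (hred : TensorReduced t) :
    Heart t (𝟙_ C) := by
  obtain ⟨a, b, hb, ha⟩ := ht (𝟙_ C)
  have hb' : t.le b.toNat (𝟙_ C) := t.le_monotone (Int.self_le_toNat b) _ hb
  have ha' : t.ge (-(-a).toNat) (𝟙_ C) := t.ge_antitone (by omega) _ ha
  exact ⟨le_zero_of_tensor_self_iso hd hred (λ_ _) hb', ge_zero_of_tensor_self_iso hd hred (λ_ _) ha'⟩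

end Unit

section Duals

variable [MonoidalCategory C] [MonoidalTriangulated C] {t : TStructure C}

lemma le_tensor_of_le_zero_left (h0 : (0 : ℤ) ∈ dev C t 0) {n : ℤ} {X Y : C}
    (hX : t.le 0 X) (hY : t.le n Y) : t.le n (X ⊗ Y) := by
  have : t.IsLE ((X ⊗ Y)⟦n⟧) 0 := ⟨(t.le 0).prop_of_iso (MonoidalTriangulated.tensorShift n X Y)
    (h0.1 X _ hX (t.le_shift n n 0 (by omega) Y hY))⟩
  exact (t.isLE_of_shift _ n n 0).le

lemma le_tensor_of_le_zero_right (h0 : (0 : ℤ) ∈ dev C t 0) {n : ℤ} {X Y : C}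
    (hX : t.le n X) (hY : t.le 0 Y) : t.le n (X ⊗ Y) := by
  have : t.IsLE ((X ⊗ Y)⟦n⟧) 0 := ⟨(t.le 0).prop_of_iso (MonoidalTriangulated.shiftTensor n X Y)
    (h0.1 _ Y (t.le_shift n n 0 (by omega) X hX) hY)⟩
  exact (t.isLE_of_shift _ n n 0).le

lemma ge_tensor_of_ge_zero_left (h0 : (0 : ℤ) ∈ dev C t 0) {n : ℤ} {X Y : C}
    (hX : t.ge 0 X) (hY : t.ge n Y) : t.ge n (X ⊗ Y) := by
  have : t.IsGE ((X ⊗ Y)⟦n⟧) 0 := ⟨(t.ge 0).prop_of_iso (MonoidalTriangulated.tensorShift n X Y)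
    (h0.2 X _ hX (t.ge_shift n n 0 (by omega) Y hY))⟩
  exact (t.isGE_of_shift _ n n 0).ge

lemma ge_tensor_of_ge_zero_right (h0 : (0 : ℤ) ∈ dev C t 0) {n : ℤ} {X Y : C}
    (hX : t.ge n X) (hY : t.ge 0 Y) : t.ge n (X ⊗ Y) := by
  have : t.IsGE ((X ⊗ Y)⟦n⟧) 0 := ⟨(t.ge 0).prop_of_iso (MonoidalTriangulated.shiftTensor n X Y)
    (h0.2 _ Y (t.ge_shift n n 0 (by omega) X hX) hY)⟩
  exact (t.isGE_of_shift _ n n 0).ge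

variable {Y Y' : C} [ExactPairing Y Y']

lemma leftDual_ge_zero_of_le_zero (h0 : (0 : ℤ) ∈ dev C t 0)
    (hunit : t.ge 0 (𝟙_ C)) (hY' : t.le 0 Y') : t.ge 0 Y := by
  refine ((t.isGE_iff_orthogonal (-1) 0 (by omega) Y).2 fun W f hW => ?_).ge
  let e : (W ⟶ Y) ≃ (Y' ⊗ W ⟶ 𝟙_ C) :=
    ((Iso.refl W).homCongr (ρ_ Y).symm).trans (tensorLeftHomEquiv W Y Y' (𝟙_ C)).symm
  have : t.IsLE (Y' ⊗ W) (-1) := ⟨le_tensor_of_le_zero_left h0 hY' hW.le⟩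
  have : t.IsGE (𝟙_ C) 0 := ⟨hunit⟩
  exact e.injective ((t.zero _ (-1) 0).trans (t.zero _ (-1) 0).symm)

lemma leftDual_le_zero_of_ge_zero (h0 : (0 : ℤ) ∈ dev C t 0)
    (hunit : t.le 0 (𝟙_ C)) (hY' : t.ge 0 Y') : t.le 0 Y := by
  refine ((t.isLE_iff_orthogonal 0 1 (by omega) Y).2 fun W f hW => ?_).le
  let e : (Y ⟶ W) ≃ (𝟙_ C ⟶ W ⊗ Y') :=
    ((λ_ Y).symm.homCongr (Iso.refl W)).trans (tensorRightHomEquiv (𝟙_ C) Y Y' W)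
  have : t.IsLE (𝟙_ C) 0 := ⟨hunit⟩
  have : t.IsGE (W ⊗ Y') 1 := ⟨ge_tensor_of_ge_zero_right h0 hW.ge hY'⟩
  exact e.injective ((t.zero _ 0 1).trans (t.zero _ 0 1).symm)

lemma rightDual_ge_zero_of_le_zero (h0 : (0 : ℤ) ∈ dev C t 0)
    (hunit : t.ge 0 (𝟙_ C)) (hY : t.le 0 Y) : t.ge 0 Y' := by
  refine ((t.isGE_iff_orthogonal (-1) 0 (by omega) Y').2 fun W f hW => ?_).ge
  let e : (W ⟶ Y') ≃ (W ⊗ Y ⟶ 𝟙_ C) :=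
    ((Iso.refl W).homCongr (λ_ Y').symm).trans (tensorRightHomEquiv W Y Y' (𝟙_ C)).symm
  have : t.IsLE (W ⊗ Y) (-1) := ⟨le_tensor_of_le_zero_right h0 hW.le hY⟩
  have : t.IsGE (𝟙_ C) 0 := ⟨hunit⟩
  exact e.injective ((t.zero _ (-1) 0).trans (t.zero _ (-1) 0).symm)

lemma rightDual_le_zero_of_ge_zero (h0 : (0 : ℤ) ∈ dev C t 0)
    (hunit : t.le 0 (𝟙_ C)) (hY : t.ge 0 Y) : t.le 0 Y' := by
  refine ((t.isLE_iff_orthogonal 0 1 (by omega) Y').2 fun W f hW => ?_).le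
  let e : (Y' ⟶ W) ≃ (𝟙_ C ⟶ Y ⊗ W) :=
    ((ρ_ Y').symm.homCongr (Iso.refl W)).trans (tensorLeftHomEquiv (𝟙_ C) Y Y' W)
  have : t.IsLE (𝟙_ C) 0 := ⟨hunit⟩
  have : t.IsGE (Y ⊗ W) 1 := ⟨ge_tensor_of_ge_zero_left h0 hY hW.ge⟩
  exact e.injective ((t.zero _ 0 1).trans (t.zero _ 0 1).symm)

end Duals

/-- For a tensor reduced monoidal t-structure `t`: duals of objects of the aisle lie in
the coaisle and conversely, so the heart is closed under taking (left or right) duals.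
(Here `ᘁX` and `Xᘁ` denote the two duals of `X`; in particular, when the ambient
category is rigid with `End(𝟙) ≅ k`, the heart is a tensor category.) -/
theorem statement11 {C : Type*} [Category C] [Preadditive C] [HasZeroObject C] [HasShift C ℤ]
    [∀ n : ℤ, (shiftFunctor C n).Additive] [Pretriangulated C] [MonoidalCategory C]
    [MonoidalTriangulated C] (hC : ∃ X : C, ¬ IsZero X)
    (t : TStructure C) (ht : IsBounded t) (d : TruncData C t) (hd : Kunneth d)
    (h0 : (0 : ℤ) ∈ dev C t 0) (hred : TensorReduced t) :
    (∀ (X : C) [HasLeftDual X], t.le 0 X → t.ge 0 (ᘁX)) ∧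
    (∀ (X : C) [HasLeftDual X], t.ge 0 X → t.le 0 (ᘁX)) ∧
    (∀ (X : C) [HasLeftDual X], Heart t X → Heart t (ᘁX)) ∧
    (∀ (X : C) [HasRightDual X], t.le 0 X → t.ge 0 (Xᘁ)) ∧
    (∀ (X : C) [HasRightDual X], t.ge 0 X → t.le 0 (Xᘁ)) ∧
    (∀ (X : C) [HasRightDual X], Heart t X → Heart t (Xᘁ)) := by
  obtain ⟨hunit_le, hunit_ge⟩ := heart_unit ht hd hred
  have left_ge (X : C) [HasLeftDual X] (hX : t.le 0 X) : t.ge 0 (ᘁX) :=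
    leftDual_ge_zero_of_le_zero h0 hunit_ge hX
  have left_le (X : C) [HasLeftDual X] (hX : t.ge 0 X) : t.le 0 (ᘁX) :=
    leftDual_le_zero_of_ge_zero h0 hunit_le hX
  have right_ge (X : C) [HasRightDual X] (hX : t.le 0 X) : t.ge 0 (Xᘁ) :=
    rightDual_ge_zero_of_le_zero h0 hunit_ge hX
  have right_le (X : C) [HasRightDual X] (hX : t.ge 0 X) : t.le 0 (Xᘁ) :=
    rightDual_le_zero_of_ge_zero h0 hunit_le hX
  exact ⟨left_ge, left_le, fun X _ hX => ⟨left_le X hX.2, left_ge X hX.1⟩,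
    right_ge, right_le, fun X _ hX => ⟨right_le X hX.2, right_ge X hX.1⟩⟩

end Paper
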